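/- arXiv:math/0409111 — 3 statements merged into one kernel-verified Lean document; each statement's English description precedes it below -/
import Mathlib

section
/- Consider the Hamiltonian system on M = {(p₁,p₂,q₁,q₂) ∈ ℝ⁴ : q₁ > 0} given by ṗ₁ = p₁p₂/q₁² + q₂, q̇₁ = p₂/q₁, ṗ₂ = q₁, q̇₂ = p₁/q₁ (the Hamiltonian system with H = p₁p₂/q₁ − q₁q₂ arising from the optimal control problem ∫₀ᵀ(q₁u₁u₂ + q₁q₂)dt → extr, q̇₁ = u₁, q̇₂ = u₂). Then the map (x, y) = (2p₂, q₁²) is a morphism of Hamiltonian systems: for every solution (p₁(t),p₂(t),q₁(t),q₂(t)), t ∈ [0,T], of the system above, the curve (x(t), y(t)) = (2p₂(t), q₁(t)²) satisfies ẋ = 2√y and ẏ = x on [0,T]. -/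
open Set

/-- The map `(x, y) = (2p₂, q₁²)` is a morphism from the Hamiltonian system
`ṗ₁ = p₁p₂/q₁² + q₂, q̇₁ = p₂/q₁, ṗ₂ = q₁, q̇₂ = p₁/q₁` (on `q₁ > 0`, coming
from `H = p₁p₂/q₁ − q₁q₂` for the problem `∫(q₁u₁u₂ + q₁q₂)dt → extr`,
`q̇₁ = u₁, q̇₂ = u₂`) to the system `ẋ = 2√y, ẏ = x`. -/
theorem stmt10 (T : ℝ) (p₁ p₂ q₁ q₂ : ℝ → ℝ)
    (hpos : ∀ t ∈ Icc (0 : ℝ) T, q₁ t > 0)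
    (hp₁ : ∀ t ∈ Icc (0 : ℝ) T,
      HasDerivAt p₁ (p₁ t * p₂ t / (q₁ t) ^ 2 + q₂ t) t)
    (hq₁ : ∀ t ∈ Icc (0 : ℝ) T, HasDerivAt q₁ (p₂ t / q₁ t) t)
    (hp₂ : ∀ t ∈ Icc (0 : ℝ) T, HasDerivAt p₂ (q₁ t) t)
    (hq₂ : ∀ t ∈ Icc (0 : ℝ) T, HasDerivAt q₂ (p₁ t / q₁ t) t) :
    ∀ t ∈ Icc (0 : ℝ) T,
      HasDerivAt (fun s => 2 * p₂ s) (2 * Real.sqrt ((q₁ t) ^ 2)) t ∧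
      HasDerivAt (fun s => (q₁ s) ^ 2) (2 * p₂ t) t := by
  intro t ht
  have hq1 := hpos t ht
  constructor
  · have := (hp₂ t ht).const_mul 2
    rwa [Real.sqrt_sq hq1.le]
  · have h := (hq₁ t ht).pow 2
    have : (2 : ℕ) * q₁ t ^ (2 - 1) * (p₂ t / q₁ t) = 2 * p₂ t := by
      field_simp
      ring
    rwa [this] at h
end

section
/- Consider the system of ODEs on {(p₁,p₂,q₁,q₂) ∈ ℝ⁴ : q₁ > 0}: ṗ₁ = p₁p₂/q₁² + q₂, q̇₁ = p₂/q₁, ṗ₂ = q₁, q̇₂ = p₁/q₁. Then the function Ḡ(p₁,p₂,q₁,q₂) = 2p₂² − (4/3)q₁³ is a first integral: for every solution (p₁(t),p₂(t),q₁(t),q₂(t)) on an interval, the value 2p₂(t)² − (4/3)q₁(t)³ is constant in t. -/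
/-! Only the `(p₂, q₁)` part of the system matters: along it
`d/dt (2 p₂²) = 4 p₂ q₁ = 4 q₁² · (p₂ / q₁) = d/dt ((4/3) q₁³)`, so `Ḡ` has zero derivative,
and a function with zero derivative on an interval is constant. -/

theorem Set.OrdConnected.eq_of_hasDerivAt_eq_zero {E : Type*} [NormedAddCommGroup E]
    [NormedSpace ℝ E] {I : Set ℝ} (hI : I.OrdConnected) {f : ℝ → E}
    (hf : ∀ t ∈ I, HasDerivAt f 0 t) {a b : ℝ} (ha : a ∈ I) (hb : b ∈ I) : f a = f b := by
  have h := hI.convex.norm_image_sub_le_of_norm_hasDerivWithin_le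
    (fun t ht => (hf t ht).hasDerivWithinAt) (fun _ _ => (norm_zero (E := E)).le) ha hb
  rw [zero_mul, norm_le_zero_iff, sub_eq_zero] at h
  exact h.symm

theorem hasDerivAt_two_mul_sq_sub_cube_eq_zero {p₂ q₁ : ℝ → ℝ} {t : ℝ} (hq : q₁ t ≠ 0)
    (hq₁ : HasDerivAt q₁ (p₂ t / q₁ t) t) (hp₂ : HasDerivAt p₂ (q₁ t) t) :
    HasDerivAt (fun s => 2 * p₂ s ^ 2 - 4 / 3 * q₁ s ^ 3) 0 t := by
  refine (((hp₂.fun_pow 2).const_mul 2).sub ((hq₁.fun_pow 3).const_mul (4 / 3))).congr_deriv ?_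
  field_simp
  ring

theorem stmt11_general (I : Set ℝ) (hI : I.OrdConnected) (p₂ q₁ : ℝ → ℝ)
    (hpos : ∀ t ∈ I, q₁ t > 0)
    (hq₁ : ∀ t ∈ I, HasDerivAt q₁ (p₂ t / q₁ t) t)
    (hp₂ : ∀ t ∈ I, HasDerivAt p₂ (q₁ t) t) :
    ∀ t₁ ∈ I, ∀ t₂ ∈ I,
      2 * (p₂ t₁) ^ 2 - (4 / 3) * (q₁ t₁) ^ 3
        = 2 * (p₂ t₂) ^ 2 - (4 / 3) * (q₁ t₂) ^ 3 := fun _ h₁ _ h₂ =>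
  hI.eq_of_hasDerivAt_eq_zero
    (fun t ht => hasDerivAt_two_mul_sq_sub_cube_eq_zero (hpos t ht).ne' (hq₁ t ht) (hp₂ t ht))
    h₁ h₂

/-- The function `Ḡ(p₁,p₂,q₁,q₂) = 2p₂² − (4/3)q₁³` is a first integral of the
system `ṗ₁ = p₁p₂/q₁² + q₂, q̇₁ = p₂/q₁, ṗ₂ = q₁, q̇₂ = p₁/q₁` on `q₁ > 0`:
it is constant along every solution on an interval. -/
theorem stmt11 (I : Set ℝ) (hI : I.OrdConnected) (p₁ p₂ q₁ q₂ : ℝ → ℝ)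
    (hpos : ∀ t ∈ I, q₁ t > 0)
    (hp₁ : ∀ t ∈ I, HasDerivAt p₁ (p₁ t * p₂ t / (q₁ t) ^ 2 + q₂ t) t)
    (hq₁ : ∀ t ∈ I, HasDerivAt q₁ (p₂ t / q₁ t) t)
    (hp₂ : ∀ t ∈ I, HasDerivAt p₂ (q₁ t) t)
    (hq₂ : ∀ t ∈ I, HasDerivAt q₂ (p₁ t / q₁ t) t) :
    ∀ t₁ ∈ I, ∀ t₂ ∈ I,
      2 * (p₂ t₁) ^ 2 - (4 / 3) * (q₁ t₁) ^ 3
        = 2 * (p₂ t₂) ^ 2 - (4 / 3) * (q₁ t₂) ^ 3 :=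
  stmt11_general I hI p₂ q₁ hpos hq₁ hp₂
end

section
/- Let Ω = I × J ⊆ ℝ² be a product of open intervals with 0 ∉ I, with coordinates (q₁,q₂), and let ξ₁, ξ₂ : Ω → ℝ be smooth functions satisfying on all of Ω: ξ₁q₂ + ξ₂q₁ = 0, ∂ξ₂/∂q₁ = 0, ∂ξ₁/∂q₂ = 0, and ξ₁ + q₁·∂ξ₁/∂q₁ + q₁·∂ξ₂/∂q₂ = 0. Then ξ₁ ≡ 0 and ξ₂ ≡ 0 on Ω. (Consequently, the Lagrangian system ∫₀ᵀ(q₁u₁u₂ + q₁q₂)dt → extr, q̇₁ = u₁, q̇₂ = u₂ admits only the trivial infinitesimal symmetry leaving both the control vector field and the Lagrangian invariant.) -/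
open Set

/-!
Differentiating the constraint `ξ₁ q₂ + ξ₂ q₁ = 0` in `q₁` and in `q₂`, and using
`∂ξ₂/∂q₁ = ∂ξ₁/∂q₂ = 0`, gives `q₂ ∂ξ₁/∂q₁ + ξ₂ = 0` and `ξ₁ + q₁ ∂ξ₂/∂q₂ = 0`. Subtracting the
second identity from the last equation of the system leaves `q₁ ∂ξ₁/∂q₁ = 0`, so `∂ξ₁/∂q₁ = 0`
since `q₁ ≠ 0`, hence `ξ₂ ≡ 0`. Then `∂ξ₂/∂q₂ = 0` and finally `ξ₁ ≡ 0`.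
-/

theorem fderiv_eq_zero_of_eqOn_zero {E F : Type*} [NormedAddCommGroup E] [NormedSpace ℝ E]
    [NormedAddCommGroup F] [NormedSpace ℝ F] {f : E → F} {U : Set E} (hU : IsOpen U)
    (hf : EqOn f 0 U) {z : E} (hz : z ∈ U) : fderiv ℝ f z = 0 := by
  have hf_nhds : f =ᶠ[nhds z] fun _ => 0 := Filter.mem_of_superset (hU.mem_nhds hz) hf
  rw [hf_nhds.fderiv_eq, fderiv_const_apply]

theorem fderiv_mul_snd_add_mul_fst_apply {f g : ℝ × ℝ → ℝ} {z : ℝ × ℝ}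
    (hf : DifferentiableAt ℝ f z) (hg : DifferentiableAt ℝ g z) (v : ℝ × ℝ) :
    fderiv ℝ (fun w => f w * w.2 + g w * w.1) z v =
      f z * v.2 + z.2 * fderiv ℝ f z v + (g z * v.1 + z.1 * fderiv ℝ g z v) := by
  rw [((hf.hasFDerivAt.fun_mul hasFDerivAt_snd).fun_add
    (hg.hasFDerivAt.fun_mul hasFDerivAt_fst)).fderiv]
  simp only [add_apply, smul_apply,
    ContinuousLinearMap.coe_fst', ContinuousLinearMap.coe_snd', smul_eq_mul]

section SymmetrySystem

variable {Ω : Set (ℝ × ℝ)} {ξ₁ ξ₂ : ℝ × ℝ → ℝ}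

theorem fderiv_constraint_apply (hΩ : IsOpen Ω) (hd₁ : DifferentiableOn ℝ ξ₁ Ω)
    (hd₂ : DifferentiableOn ℝ ξ₂ Ω) (h1 : ∀ z ∈ Ω, ξ₁ z * z.2 + ξ₂ z * z.1 = 0)
    {z : ℝ × ℝ} (hz : z ∈ Ω) (v : ℝ × ℝ) :
    ξ₁ z * v.2 + z.2 * fderiv ℝ ξ₁ z v + (ξ₂ z * v.1 + z.1 * fderiv ℝ ξ₂ z v) = 0 := by
  have hconst : fderiv ℝ (fun w => ξ₁ w * w.2 + ξ₂ w * w.1) z = 0 :=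
    fderiv_eq_zero_of_eqOn_zero hΩ h1 hz
  rw [← fderiv_mul_snd_add_mul_fst_apply (hd₁.differentiableAt (hΩ.mem_nhds hz))
    (hd₂.differentiableAt (hΩ.mem_nhds hz)), hconst]
  rfl

theorem eqOn_zero_snd_of_symmetry_system (hΩ : IsOpen Ω) (hq : ∀ z ∈ Ω, z.1 ≠ 0)
    (hd₁ : DifferentiableOn ℝ ξ₁ Ω) (hd₂ : DifferentiableOn ℝ ξ₂ Ω)
    (h1 : ∀ z ∈ Ω, ξ₁ z * z.2 + ξ₂ z * z.1 = 0) (h2 : ∀ z ∈ Ω, fderiv ℝ ξ₂ z (1, 0) = 0)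
    (h3 : ∀ z ∈ Ω, fderiv ℝ ξ₁ z (0, 1) = 0)
    (h4 : ∀ z ∈ Ω, ξ₁ z + z.1 * fderiv ℝ ξ₁ z (1, 0) + z.1 * fderiv ℝ ξ₂ z (0, 1) = 0) :
    EqOn ξ₂ 0 Ω := by
  intro z hz
  have hpartial₁ := fderiv_constraint_apply hΩ hd₁ hd₂ h1 hz (1, 0)
  have hpartial₂ := fderiv_constraint_apply hΩ hd₁ hd₂ h1 hz (0, 1)
  simp only [h2 z hz, h3 z hz, mul_zero, mul_one, zero_add, add_zero] at hpartial₁ hpartial₂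
  have hd₁₁ : fderiv ℝ ξ₁ z (1, 0) = 0 :=
    (mul_eq_zero.mp (by linarith [h4 z hz])).resolve_left (hq z hz)
  rw [hd₁₁, mul_zero, zero_add] at hpartial₁
  exact hpartial₁

theorem eqOn_zero_fst_of_symmetry_system (hΩ : IsOpen Ω) (hd₁ : DifferentiableOn ℝ ξ₁ Ω)
    (hd₂ : DifferentiableOn ℝ ξ₂ Ω) (h1 : ∀ z ∈ Ω, ξ₁ z * z.2 + ξ₂ z * z.1 = 0)
    (h3 : ∀ z ∈ Ω, fderiv ℝ ξ₁ z (0, 1) = 0) (hξ₂ : EqOn ξ₂ 0 Ω) : EqOn ξ₁ 0 Ω := by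
  intro z hz
  have hpartial₂ := fderiv_constraint_apply hΩ hd₁ hd₂ h1 hz (0, 1)
  rw [h3 z hz, fderiv_eq_zero_of_eqOn_zero hΩ hξ₂ hz] at hpartial₂
  simpa using hpartial₂

end SymmetrySystem

theorem stmt12_general (I J : Set ℝ)
    (hIopen : IsOpen I) (hJopen : IsOpen J)
    (hI0 : (0 : ℝ) ∉ I)
    (ξ₁ ξ₂ : ℝ × ℝ → ℝ)
    (hξ₁ : ContDiffOn ℝ (⊤ : ℕ∞) ξ₁ (I ×ˢ J))
    (hξ₂ : ContDiffOn ℝ (⊤ : ℕ∞) ξ₂ (I ×ˢ J))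
    (h1 : ∀ z ∈ I ×ˢ J, ξ₁ z * z.2 + ξ₂ z * z.1 = 0)
    (h2 : ∀ z ∈ I ×ˢ J, fderiv ℝ ξ₂ z (1, 0) = 0)
    (h3 : ∀ z ∈ I ×ˢ J, fderiv ℝ ξ₁ z (0, 1) = 0)
    (h4 : ∀ z ∈ I ×ˢ J,
      ξ₁ z + z.1 * fderiv ℝ ξ₁ z (1, 0) + z.1 * fderiv ℝ ξ₂ z (0, 1) = 0) :
    ∀ z ∈ I ×ˢ J, ξ₁ z = 0 ∧ ξ₂ z = 0 := by
  have hΩ : IsOpen (I ×ˢ J) := hIopen.prod hJopen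
  have hq : ∀ z ∈ I ×ˢ J, z.1 ≠ 0 := fun z hz h => hI0 (h ▸ hz.1)
  have hd₁ := hξ₁.differentiableOn (by simp)
  have hd₂ := hξ₂.differentiableOn (by simp)
  have hξ₂0 := eqOn_zero_snd_of_symmetry_system hΩ hq hd₁ hd₂ h1 h2 h3 h4
  have hξ₁0 := eqOn_zero_fst_of_symmetry_system hΩ hd₁ hd₂ h1 h3 hξ₂0
  exact fun z hz => ⟨hξ₁0 hz, hξ₂0 hz⟩

/-- The system of PDEs for infinitesimal symmetries of the Lagrangian system
`∫(q₁u₁u₂ + q₁q₂)dt → extr`, `q̇₁ = u₁, q̇₂ = u₂` has only the trivial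
solution: if, on a product `Ω = I × J` of open intervals with `0 ∉ I`, smooth
`ξ₁, ξ₂` satisfy `ξ₁q₂ + ξ₂q₁ = 0`, `∂ξ₂/∂q₁ = 0`, `∂ξ₁/∂q₂ = 0` and
`ξ₁ + q₁·∂ξ₁/∂q₁ + q₁·∂ξ₂/∂q₂ = 0`, then `ξ₁ ≡ 0` and `ξ₂ ≡ 0` on `Ω`. -/
theorem stmt12 (I J : Set ℝ)
    (hIopen : IsOpen I) (hJopen : IsOpen J)
    (hIconn : I.OrdConnected) (hJconn : J.OrdConnected)
    (hI0 : (0 : ℝ) ∉ I)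
    (ξ₁ ξ₂ : ℝ × ℝ → ℝ)
    (hξ₁ : ContDiffOn ℝ (⊤ : ℕ∞) ξ₁ (I ×ˢ J))
    (hξ₂ : ContDiffOn ℝ (⊤ : ℕ∞) ξ₂ (I ×ˢ J))
    (h1 : ∀ z ∈ I ×ˢ J, ξ₁ z * z.2 + ξ₂ z * z.1 = 0)
    (h2 : ∀ z ∈ I ×ˢ J, fderiv ℝ ξ₂ z (1, 0) = 0)
    (h3 : ∀ z ∈ I ×ˢ J, fderiv ℝ ξ₁ z (0, 1) = 0)
    (h4 : ∀ z ∈ I ×ˢ J,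
      ξ₁ z + z.1 * fderiv ℝ ξ₁ z (1, 0) + z.1 * fderiv ℝ ξ₂ z (0, 1) = 0) :
    ∀ z ∈ I ×ˢ J, ξ₁ z = 0 ∧ ξ₂ z = 0 :=
  stmt12_general I J hIopen hJopen hI0 ξ₁ ξ₂ hξ₁ hξ₂ h1 h2 h3 h4
end
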